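/- Completeness of polarized subtyping for call-by-name: for call-by-name type names t, u and their Levy translations [t]_N, [u]_N into negative CBPV type names, (1) if t full (CBN fullness) then [t]_N full (CBPV fullness), and (2) if t ≤ u (CBN subtyping) then [t]_N ≤ [u]_N (CBPV negative subtyping). -/

import Mathlib

namespace CBPV

abbrev Label := String
abbrev Var := String

-- Positive types (values); `name` refers to an equirecursively defined type name.
mutual
inductive PosTp : Type where
  | name : String → PosTp
  | str  : PosStr → PosTp

/-- Structural positive types. -/
inductive PosStr : Type where
  | tensor : PosTp → PosTp → PosStr
  | one    : PosStr
  | plus   : List (Label × PosTp) → PosStr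
  | down   : NegTp → PosStr

/-- Negative types (computations). -/
inductive NegTp : Type where
  | name : String → NegTp
  | str  : NegStr → NegTp

/-- Structural negative types. -/
inductive NegStr : Type where
  | arrow   : PosTp → NegTp → NegStr
  | withRec : List (Label × NegTp) → NegStr
  | up      : PosTp → NegStr
end

mutual
/-- Values. -/
inductive Val : Type where
  | var   : Var → Val
  | pair  : Val → Val → Val
  | unit  : Val
  | inj   : Label → Val → Val
  | thunk : Comp → Val

/-- Computations. -/
inductive Comp : Type where
  | lam       : Var → Comp → Comp
  | app       : Comp → Val → Comp
  | record    : List (Label × Comp) → Comp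
  | proj      : Comp → Label → Comp
  | ret       : Val → Comp
  | letret    : Var → Comp → Comp → Comp
  | name      : String → Comp
  | matchPair : Val → Var → Var → Comp → Comp
  | matchUnit : Val → Comp → Comp
  | matchSum  : Val → List (Label × Var × Comp) → Comp
  | force     : Val → Comp
end

/-- A global signature: equirecursive (contractive) type definitions `t = τ⁺`,
`s = σ⁻`, and recursive expression definitions `f : σ⁻ = e`. -/
structure Signature : Type where
  pos  : String → PosStr
  neg  : String → NegStr
  defs : String → NegTp × Comp

mutual
/-- Substitution of value `w` for variable `x` in a value. -/
def substV (w : Val) (x : Var) : Val → Val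
  | .var y => if y = x then w else .var y
  | .pair v₁ v₂ => .pair (substV w x v₁) (substV w x v₂)
  | .unit => .unit
  | .inj j v => .inj j (substV w x v)
  | .thunk e => .thunk (substC w x e)

/-- Substitution of value `w` for variable `x` in a computation. -/
def substC (w : Val) (x : Var) : Comp → Comp
  | .lam y e => .lam y (if y = x then e else substC w x e)
  | .app e v => .app (substC w x e) (substV w x v)
  | .record L => .record (substRec w x L)
  | .proj e j => .proj (substC w x e) j
  | .ret v => .ret (substV w x v)
  | .letret y e₁ e₂ => .letret y (substC w x e₁) (if y = x then e₂ else substC w x e₂)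
  | .name f => .name f
  | .matchPair v y z e =>
      .matchPair (substV w x v) y z (if y = x ∨ z = x then e else substC w x e)
  | .matchUnit v e => .matchUnit (substV w x v) (substC w x e)
  | .matchSum v B => .matchSum (substV w x v) (substBr w x B)
  | .force v => .force (substV w x v)

def substRec (w : Val) (x : Var) : List (Label × Comp) → List (Label × Comp)
  | [] => []
  | (l, e) :: rest => (l, substC w x e) :: substRec w x rest

def substBr (w : Val) (x : Var) : List (Label × Var × Comp) → List (Label × Var × Comp)
  | [] => []
  | (l, y, e) :: rest =>
      (l, y, if y = x then e else substC w x e) :: substBr w x rest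
end

/-- Terminal computations. -/
inductive Terminal : Comp → Prop where
  | lam    : Terminal (.lam x e)
  | record : Terminal (.record L)
  | ret    : Terminal (.ret v)

/-- Small-step dynamics of call-by-push-value, relative to a signature. -/
inductive Step (Sg : Signature) : Comp → Comp → Prop where
  | beta       : Step Sg (.app (.lam x e) v) (substC v x e)
  | app        : Step Sg e e' → Step Sg (.app e v) (.app e' v)
  | letretBeta : Step Sg (.letret x (.ret v) e₂) (substC v x e₂)
  | letretStep : Step Sg e₁ e₁' → Step Sg (.letret x e₁ e₂) (.letret x e₁' e₂)
  | projBeta   : L.lookup j = some e → Step Sg (.proj (.record L) j) e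
  | projStep   : Step Sg e e' → Step Sg (.proj e j) (.proj e' j)
  | matchPair  : Step Sg (.matchPair (.pair v₁ v₂) x y e) (substC v₁ x (substC v₂ y e))
  | matchUnit  : Step Sg (.matchUnit .unit e) e
  | matchSum   : B.lookup j = some (x, ej) → Step Sg (.matchSum (.inj j v) B) (substC v x ej)
  | force      : Step Sg (.force (.thunk e)) e
  | name       : Sg.defs f = (σ, e) → Step Sg (.name f) e

end CBPV

namespace CBPV

def PosTp.IsName : PosTp → Prop := fun τ => ∃ t, τ = .name t
def NegTp.IsName : NegTp → Prop := fun σ => ∃ s, σ = .name s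

/-- A structural positive type is in normal form if all of its components are
type names, and its label lists have no duplicate labels. -/
def PosStrNormal : PosStr → Prop
  | .tensor τ₁ τ₂ => τ₁.IsName ∧ τ₂.IsName
  | .one => True
  | .plus L => (∀ p ∈ L, (Prod.snd p).IsName) ∧ (L.map Prod.fst).Nodup
  | .down σ => σ.IsName

def NegStrNormal : NegStr → Prop
  | .arrow τ σ => τ.IsName ∧ σ.IsName
  | .withRec L => (∀ p ∈ L, (Prod.snd p).IsName) ∧ (L.map Prod.fst).Nodup
  | .up τ => τ.IsName

/-- A signature is in normal form when every type definition alternates between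
type names and structural types, i.e. the components of every defined
structural type are themselves type names. -/
def SigNormal (Sg : Signature) : Prop :=
  (∀ t, PosStrNormal (Sg.pos t)) ∧ (∀ s, NegStrNormal (Sg.neg s))

/-- One unfolding of the rules for the emptiness judgment `t empty`. -/
def EmptyUnf (Sg : Signature) (S : String → Prop) (t : String) : Prop :=
  (∃ L, Sg.pos t = .plus L ∧
     ∀ p ∈ L, ∃ tj, Prod.snd p = PosTp.name tj ∧ S tj) ∨
  (∃ t₁ t₂, Sg.pos t = .tensor (.name t₁) (.name t₂) ∧ (S t₁ ∨ S t₂))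

/-- `t empty`: the greatest fixed point (circular derivations) of the
emptiness rules. -/
def TpEmpty (Sg : Signature) (t : String) : Prop :=
  ∃ S : String → Prop, (∀ u, S u → EmptyUnf Sg S u) ∧ S t

/-- `s full`: `s = t₁ → s₂ ∈ Σ` with `t₁ empty`, or `s = &{} ∈ Σ`. -/
def TpFull (Sg : Signature) (s : String) : Prop :=
  (∃ t₁ s₂, Sg.neg s = .arrow (.name t₁) (.name s₂) ∧ TpEmpty Sg t₁) ∨
  Sg.neg s = .withRec []

/-- One unfolding of the rules for positive subtyping `t ≤ u` between
positive type names. -/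
def PosSubUnf (Sg : Signature) (P N : String → String → Prop) (t u : String) : Prop :=
  (∃ t₁ t₂ u₁ u₂, Sg.pos t = .tensor (.name t₁) (.name t₂) ∧
     Sg.pos u = .tensor (.name u₁) (.name u₂) ∧ P t₁ u₁ ∧ P t₂ u₂) ∨
  (Sg.pos t = .one ∧ Sg.pos u = .one) ∨
  (∃ L K, Sg.pos t = .plus L ∧ Sg.pos u = .plus K ∧
     ∀ p ∈ L, ∃ tj, Prod.snd p = PosTp.name tj ∧
       (TpEmpty Sg tj ∨ ∃ uj, K.lookup (Prod.fst p) = some (PosTp.name uj) ∧ P tj uj)) ∨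
  (∃ s r, Sg.pos t = .down (.name s) ∧ Sg.pos u = .down (.name r) ∧ N s r) ∨
  TpEmpty Sg t

/-- One unfolding of the rules for negative subtyping `s ≤ r` between
negative type names. -/
def NegSubUnf (Sg : Signature) (P N : String → String → Prop) (s r : String) : Prop :=
  (∃ t₁ s₂ u₁ r₂, Sg.neg s = .arrow (.name t₁) (.name s₂) ∧
     Sg.neg r = .arrow (.name u₁) (.name r₂) ∧ P u₁ t₁ ∧ N s₂ r₂) ∨
  (∃ t u, Sg.neg s = .up (.name t) ∧ Sg.neg r = .up (.name u) ∧ P t u) ∨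
  (∃ L K, Sg.neg s = .withRec L ∧ Sg.neg r = .withRec K ∧
     ∀ p ∈ K, ∃ rj, Prod.snd p = NegTp.name rj ∧
       ∃ sj, L.lookup (Prod.fst p) = some (NegTp.name sj) ∧ N sj rj) ∨
  (∃ t, Sg.neg s = .up (.name t) ∧ TpEmpty Sg t) ∨
  TpFull Sg r

/-- `t ≤ u`: syntactic subtyping between positive type names, interpreted as
circular derivations (greatest fixed point of the subtyping rules). -/
def PosSub (Sg : Signature) (t u : String) : Prop :=
  ∃ P N : String → String → Prop,
    (∀ a b, P a b → PosSubUnf Sg P N a b) ∧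
    (∀ a b, N a b → NegSubUnf Sg P N a b) ∧ P t u

/-- `s ≤ r`: syntactic subtyping between negative type names, interpreted as
circular derivations (greatest fixed point of the subtyping rules). -/
def NegSub (Sg : Signature) (s r : String) : Prop :=
  ∃ P N : String → String → Prop,
    (∀ a b, P a b → PosSubUnf Sg P N a b) ∧
    (∀ a b, N a b → NegSubUnf Sg P N a b) ∧ N s r

end CBPV

namespace CBPV

/-- Structural source-language types (for call-by-name and call-by-value),
with type-name components: functions, eager pairs, unit, variant records and
lazy records. -/
inductive SrcTp : Type where
  | arrow   : String → String → SrcTp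
  | tensor  : String → String → SrcTp
  | one     : SrcTp
  | plus    : List (Label × String) → SrcTp
  | withRec : List (Label × String) → SrcTp

/-- A source-language signature of equirecursive type-name definitions. -/
structure SrcSig : Type where
  def_ : String → SrcTp

end CBPV

namespace CBPV

/-- Call-by-name fullness: `t full` iff `t = &{}`. -/
def CBNFull (S : SrcSig) (t : String) : Prop := S.def_ t = .withRec []

/-- One unfolding of the rules for call-by-name subtyping `t ≤ u`. -/
def CBNUnf (S : SrcSig) (R : String → String → Prop) (t u : String) : Prop :=
  (∃ t₁ t₂ u₁ u₂, S.def_ t = .arrow t₁ t₂ ∧ S.def_ u = .arrow u₁ u₂ ∧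
     R u₁ t₁ ∧ R t₂ u₂) ∨
  (∃ t₁ t₂ u₁ u₂, S.def_ t = .tensor t₁ t₂ ∧ S.def_ u = .tensor u₁ u₂ ∧
     R t₁ u₁ ∧ R t₂ u₂) ∨
  (S.def_ t = .one ∧ S.def_ u = .one) ∨
  (∃ L J, S.def_ t = .plus L ∧ S.def_ u = .plus J ∧
     ∀ p ∈ L, ∃ uℓ, J.lookup (Prod.fst p) = some uℓ ∧ R (Prod.snd p) uℓ) ∨
  (∃ L J, S.def_ t = .withRec L ∧ S.def_ u = .withRec J ∧
     ∀ p ∈ J, ∃ tj, L.lookup (Prod.fst p) = some tj ∧ R tj (Prod.snd p)) ∨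
  (S.def_ t = .plus []) ∨
  CBNFull S u

/-- Call-by-name subtyping `t ≤ u`, interpreted as circular derivations
(greatest fixed point of the call-by-name subtyping rules). -/
def CBNSub (S : SrcSig) (t u : String) : Prop :=
  ∃ R : String → String → Prop, (∀ a b, R a b → CBNUnf S R a b) ∧ R t u

/-- Levy's call-by-name translation of types, specified relationally:
`tr t` is the CBPV negative type name `[t]_N`, and the translated signature is
in normal form, with auxiliary type names inserted as needed:
`[τ→σ]_N = ↓[τ]_N → [σ]_N`, `[τ₁⊗τ₂]_N = ↑(↓[τ₁]_N ⊗ ↓[τ₂]_N)`, `[1]_N = ↑1`,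
`[⊕{ℓ:τ_ℓ}]_N = ↑⊕{ℓ:↓[τ_ℓ]_N}`, and `[&{ℓ:σ_ℓ}]_N = &{ℓ:[σ_ℓ]_N}`. -/
def CBNTrans (S : SrcSig) (Sg : Signature) (tr : String → String) : Prop :=
  ∀ t : String,
    match S.def_ t with
    | .arrow t₁ t₂ => ∃ p,
        Sg.neg (tr t) = .arrow (.name p) (.name (tr t₂)) ∧
        Sg.pos p = .down (.name (tr t₁))
    | .tensor t₁ t₂ => ∃ q p₁ p₂,
        Sg.neg (tr t) = .up (.name q) ∧
        Sg.pos q = .tensor (.name p₁) (.name p₂) ∧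
        Sg.pos p₁ = .down (.name (tr t₁)) ∧
        Sg.pos p₂ = .down (.name (tr t₂))
    | .one => ∃ q, Sg.neg (tr t) = .up (.name q) ∧ Sg.pos q = .one
    | .plus L => ∃ (q : String) (P : Label × String → String),
        Sg.neg (tr t) = .up (.name q) ∧
        Sg.pos q = .plus (L.map (fun p => (p.1, PosTp.name (P p)))) ∧
        ∀ p ∈ L, Sg.pos (P p) = .down (.name (tr (Prod.snd p)))
    | .withRec L =>
        Sg.neg (tr t) = .withRec (L.map (fun p => (p.1, NegTp.name (tr p.2))))

end CBPV

/-!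
A circular CBN derivation, i.e. a relation `R` closed under the CBN rules, is mapped to a
circular CBPV derivation: negatively, `[a]_N ≤ [b]_N` for `R a b`; positively, the thunks
`↓[a]_N ≤ ↓[b]_N` and, when `[a]_N = ↑q` and `[b]_N = ↑q'`, also `q ≤ q'`. Every CBN rule is
then matched by a CBPV rule: `→` and `&` by the same rule, `⊗`, `1`, `⊕` by the `↑`-rule
followed by the positive rule, `⊕{}` by the `↑`-rule for the empty sum `↑⊕{}`, and `&{}` by
fullness of its translation `&{}`.
-/

theorem List.lookup_map_keep_fst {α β γ : Type*} [BEq α] [LawfulBEq α] (g : α × β → γ)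
    (l : List (α × β)) (k : α) :
    (l.map fun p => (p.1, g p)).lookup k = (l.lookup k).map fun v => g (k, v) := by
  induction l with
  | nil => rfl
  | cons hd tl ih =>
    obtain ⟨k', v'⟩ := hd
    by_cases hk : k = k'
    · subst hk
      simp
    · simp [List.lookup_cons, beq_false_of_ne hk, ih]

theorem List.mem_of_lookup_eq_some {α β : Type*} [BEq α] [LawfulBEq α] {l : List (α × β)}
    {k : α} {v : β} (h : l.lookup k = some v) : (k, v) ∈ l := by
  obtain ⟨l₁, l₂, rfl, -⟩ := List.lookup_eq_some_iff.mp h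
  simp

namespace CBPV

variable {S : SrcSig} {Sg : Signature} {tr : String → String}

theorem tpEmpty_of_pos_eq_plus_nil {q : String} (h : Sg.pos q = .plus []) : TpEmpty Sg q :=
  ⟨fun x => Sg.pos x = .plus [], fun _ hu => Or.inl ⟨[], hu, by simp⟩, h⟩

namespace CBNTrans

variable {a : String}

theorem arrow (htr : CBNTrans S Sg tr) {t₁ t₂ : String} (h : S.def_ a = .arrow t₁ t₂) :
    ∃ p, Sg.neg (tr a) = .arrow (.name p) (.name (tr t₂)) ∧
      Sg.pos p = .down (.name (tr t₁)) := by
  simpa [h] using htr a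

theorem tensor (htr : CBNTrans S Sg tr) {t₁ t₂ : String} (h : S.def_ a = .tensor t₁ t₂) :
    ∃ q p₁ p₂, Sg.neg (tr a) = .up (.name q) ∧ Sg.pos q = .tensor (.name p₁) (.name p₂) ∧
      Sg.pos p₁ = .down (.name (tr t₁)) ∧ Sg.pos p₂ = .down (.name (tr t₂)) := by
  simpa [h] using htr a

theorem one (htr : CBNTrans S Sg tr) (h : S.def_ a = .one) :
    ∃ q, Sg.neg (tr a) = .up (.name q) ∧ Sg.pos q = .one := by
  simpa [h] using htr a

theorem plus (htr : CBNTrans S Sg tr) {L : List (Label × String)} (h : S.def_ a = .plus L) :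
    ∃ (q : String) (P : Label × String → String), Sg.neg (tr a) = .up (.name q) ∧
      Sg.pos q = .plus (L.map fun p => (p.1, PosTp.name (P p))) ∧
      ∀ p ∈ L, Sg.pos (P p) = .down (.name (tr p.2)) := by
  simpa [h] using htr a

theorem withRec (htr : CBNTrans S Sg tr) {L : List (Label × String)}
    (h : S.def_ a = .withRec L) :
    Sg.neg (tr a) = .withRec (L.map fun p => (p.1, NegTp.name (tr p.2))) := by
  simpa [h] using htr a

theorem up_of_plus_nil (htr : CBNTrans S Sg tr) (h : S.def_ a = .plus []) :
    ∃ q, Sg.neg (tr a) = .up (.name q) ∧ TpEmpty Sg q := by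
  obtain ⟨q, _, hq, hplus, -⟩ := htr.plus h
  exact ⟨q, hq, tpEmpty_of_pos_eq_plus_nil (by simpa using hplus)⟩

theorem tpFull (htr : CBNTrans S Sg tr) (h : CBNFull S a) : TpFull Sg (tr a) :=
  Or.inr (by simpa using htr.withRec h)

end CBNTrans

variable (Sg tr) (R : String → String → Prop)

def cbnNegRel (s r : String) : Prop := ∃ a b, R a b ∧ s = tr a ∧ r = tr b

def cbnPosRel (p q : String) : Prop :=
  ∃ a b, R a b ∧
    ((Sg.pos p = .down (.name (tr a)) ∧ Sg.pos q = .down (.name (tr b))) ∨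
     (Sg.neg (tr a) = .up (.name p) ∧ Sg.neg (tr b) = .up (.name q)))

variable {Sg tr R}

theorem cbnPosRel_of_up {a b p q : String} (hab : R a b) (hp : Sg.neg (tr a) = .up (.name p))
    (hq : Sg.neg (tr b) = .up (.name q)) : cbnPosRel Sg tr R p q :=
  ⟨a, b, hab, Or.inr ⟨hp, hq⟩⟩

theorem cbnPosRel_of_down {a b p q : String} (hab : R a b)
    (hp : Sg.pos p = .down (.name (tr a))) (hq : Sg.pos q = .down (.name (tr b))) :
    cbnPosRel Sg tr R p q :=
  ⟨a, b, hab, Or.inl ⟨hp, hq⟩⟩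

theorem posSubUnf_of_plus (htr : CBNTrans S Sg tr) {a b p q : String}
    {L J : List (Label × String)} (ha : S.def_ a = .plus L) (hb : S.def_ b = .plus J)
    (hLJ : ∀ c ∈ L, ∃ d, J.lookup c.1 = some d ∧ R c.2 d)
    (hp : Sg.neg (tr a) = .up (.name p)) (hq : Sg.neg (tr b) = .up (.name q)) :
    PosSubUnf Sg (cbnPosRel Sg tr R) (cbnNegRel tr R) p q := by
  obtain ⟨p', Pa, hp', hpa, hPa⟩ := htr.plus ha
  obtain ⟨q', Pb, hq', hqb, hPb⟩ := htr.plus hb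
  obtain rfl : p' = p := by simpa [hp'] using hp
  obtain rfl : q' = q := by simpa [hq'] using hq
  refine Or.inr <| Or.inr <| Or.inl ⟨_, _, hpa, hqb, ?_⟩
  simp only [List.mem_map]
  rintro _ ⟨⟨k, c⟩, hkc, rfl⟩
  obtain ⟨d, hd, hcd⟩ := hLJ (k, c) hkc
  refine ⟨Pa (k, c), rfl, Or.inr ⟨Pb (k, d), by simp [List.lookup_map_keep_fst, hd], ?_⟩⟩
  exact cbnPosRel_of_down hcd (hPa _ hkc) (hPb _ (List.mem_of_lookup_eq_some hd))

theorem posSubUnf_of_up (htr : CBNTrans S Sg tr) {a b p q : String} (hR : CBNUnf S R a b)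
    (hp : Sg.neg (tr a) = .up (.name p)) (hq : Sg.neg (tr b) = .up (.name q)) :
    PosSubUnf Sg (cbnPosRel Sg tr R) (cbnNegRel tr R) p q := by
  rcases hR with ⟨_, _, _, _, ha, -⟩ | ⟨_, _, _, _, ha, hb, h₁, h₂⟩ | ⟨ha, hb⟩ |
    ⟨_, _, ha, hb, hLJ⟩ | ⟨_, _, ha, -⟩ | ha | hb
  · obtain ⟨_, ha', -⟩ := htr.arrow ha
    simp [ha'] at hp
  · obtain ⟨p', pa₁, pa₂, hp', hpa, hpa₁, hpa₂⟩ := htr.tensor ha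
    obtain ⟨q', qb₁, qb₂, hq', hqb, hqb₁, hqb₂⟩ := htr.tensor hb
    obtain rfl : p' = p := by simpa [hp'] using hp
    obtain rfl : q' = q := by simpa [hq'] using hq
    exact Or.inl ⟨_, _, _, _, hpa, hqb, cbnPosRel_of_down h₁ hpa₁ hqb₁,
      cbnPosRel_of_down h₂ hpa₂ hqb₂⟩
  · obtain ⟨p', hp', hpa⟩ := htr.one ha
    obtain ⟨q', hq', hqb⟩ := htr.one hb
    obtain rfl : p' = p := by simpa [hp'] using hp
    obtain rfl : q' = q := by simpa [hq'] using hq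
    exact Or.inr <| Or.inl ⟨hpa, hqb⟩
  · exact posSubUnf_of_plus htr ha hb hLJ hp hq
  · simp [htr.withRec ha] at hp
  · obtain ⟨p', hp', hempty⟩ := htr.up_of_plus_nil ha
    obtain rfl : p' = p := by simpa [hp'] using hp
    exact Or.inr <| Or.inr <| Or.inr <| Or.inr hempty
  · simp [htr.withRec hb] at hq

theorem posSubUnf_of_cbnPosRel (htr : CBNTrans S Sg tr) (hR : ∀ a b, R a b → CBNUnf S R a b)
    {p q : String} (hpq : cbnPosRel Sg tr R p q) :
    PosSubUnf Sg (cbnPosRel Sg tr R) (cbnNegRel tr R) p q := by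
  obtain ⟨a, b, hab, ⟨hp, hq⟩ | ⟨hp, hq⟩⟩ := hpq
  · exact Or.inr <| Or.inr <| Or.inr <| Or.inl ⟨_, _, hp, hq, a, b, hab, rfl, rfl⟩
  · exact posSubUnf_of_up htr (hR a b hab) hp hq

theorem negSubUnf_of_cbnNegRel (htr : CBNTrans S Sg tr) (hR : ∀ a b, R a b → CBNUnf S R a b)
    {s r : String} (hsr : cbnNegRel tr R s r) :
    NegSubUnf Sg (cbnPosRel Sg tr R) (cbnNegRel tr R) s r := by
  obtain ⟨a, b, hab, rfl, rfl⟩ := hsr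
  rcases hR a b hab with ⟨_, a₂, _, b₂, ha, hb, h₁, h₂⟩ | ⟨_, _, _, _, ha, hb, -⟩ |
    ⟨ha, hb⟩ | ⟨_, _, ha, hb, -⟩ | ⟨_, _, ha, hb, hJL⟩ | ha | hb
  · obtain ⟨_, ha', hpa⟩ := htr.arrow ha
    obtain ⟨_, hb', hpb⟩ := htr.arrow hb
    exact Or.inl ⟨_, _, _, _, ha', hb', cbnPosRel_of_down h₁ hpb hpa, a₂, b₂, h₂, rfl, rfl⟩
  · obtain ⟨_, _, _, ha', -⟩ := htr.tensor ha
    obtain ⟨_, _, _, hb', -⟩ := htr.tensor hb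
    exact Or.inr <| Or.inl ⟨_, _, ha', hb', cbnPosRel_of_up hab ha' hb'⟩
  · obtain ⟨_, ha', -⟩ := htr.one ha
    obtain ⟨_, hb', -⟩ := htr.one hb
    exact Or.inr <| Or.inl ⟨_, _, ha', hb', cbnPosRel_of_up hab ha' hb'⟩
  · obtain ⟨_, _, ha', -⟩ := htr.plus ha
    obtain ⟨_, _, hb', -⟩ := htr.plus hb
    exact Or.inr <| Or.inl ⟨_, _, ha', hb', cbnPosRel_of_up hab ha' hb'⟩
  · refine Or.inr <| Or.inr <| Or.inl ⟨_, _, htr.withRec ha, htr.withRec hb, ?_⟩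
    simp only [List.mem_map]
    rintro _ ⟨⟨k, d⟩, hkd, rfl⟩
    obtain ⟨c, hc, hcd⟩ := hJL (k, d) hkd
    exact ⟨tr d, rfl, tr c, by simp [List.lookup_map_keep_fst, hc], c, d, hcd, rfl, rfl⟩
  · obtain ⟨_, ha', hempty⟩ := htr.up_of_plus_nil ha
    exact Or.inr <| Or.inr <| Or.inr <| Or.inl ⟨_, ha', hempty⟩
  · exact Or.inr <| Or.inr <| Or.inr <| Or.inr (htr.tpFull hb)

end CBPV

namespace CBPV

/-- Completeness of polarized subtyping for call-by-name: for call-by-name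
type names `t`, `u` and their Levy translations `[t]_N`, `[u]_N` into negative
CBPV type names,
(1) if `t full` (CBN fullness) then `[t]_N full` (CBPV fullness), and
(2) if `t ≤ u` (CBN subtyping) then `[t]_N ≤ [u]_N` (CBPV negative subtyping). -/
theorem cbn_subtyping_complete (S : SrcSig) (Sg : Signature)
    (tr : String → String) (htr : CBNTrans S Sg tr) :
    (∀ t : String, CBNFull S t → TpFull Sg (tr t)) ∧
    (∀ t u : String, CBNSub S t u → NegSub Sg (tr t) (tr u)) := by
  refine ⟨fun _ => htr.tpFull, ?_⟩
  rintro t u ⟨R, hR, htu⟩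
  exact ⟨cbnPosRel Sg tr R, cbnNegRel tr R, fun _ _ => posSubUnf_of_cbnPosRel htr hR,
    fun _ _ => negSubUnf_of_cbnNegRel htr hR, t, u, htu, rfl, rfl⟩

end CBPV
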